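/- arXiv:1404.6994 — 4 statements merged into one kernel-verified Lean document; each statement's English description precedes it below -/
import Mathlib

section
/- Let k ≥ 1, let q_1,…,q_k be primes, let N ∈ ℝ^k with 0 ≤ N_i < q_i for each i, and let H, P be tuples of real numbers with 1 ≤ P_i ≤ H_i and H_i·P_i < q_i for each i. For m ∈ ℤ^k let A(m) denote the number of pairs (a,p) with p_i prime, P_i < p_i ≤ 2P_i, a_i an integer with 0 ≤ a_i < p_i, and (N_i − a_i q_i)/p_i − H_i/P_i < m_i ≤ (N_i − a_i q_i)/p_i for each i = 1,…,k. Then: (a) A(m) = 0 unless |m_i| ≤ 2q_i for all i; and (b) Σ_{m∈ℤ^k} A(m) ≤ Σ_{m∈ℤ^k} A(m)² ≤ C_k ‖H‖·‖P‖ for a constant C_k depending only on k, where ‖H‖ = H_1⋯H_k and ‖P‖ = P_1⋯P_k. -/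
open scoped BigOperators

/-- The counting function `A(m)`: the number of pairs `(a,p)` with each `p_i` prime in
`(P_i, 2P_i]`, `0 ≤ a_i < p_i`, and `(N_i − a_i q_i)/p_i − H_i/P_i < m_i ≤ (N_i − a_i q_i)/p_i`. -/
noncomputable def Acount {k : ℕ} (q : Fin k → ℕ) (N H P : Fin k → ℝ) (m : Fin k → ℤ) : ℕ :=
  Set.ncard {ap : (Fin k → ℤ) × (Fin k → ℕ) |
    ∀ i, (ap.2 i).Prime ∧ P i < (ap.2 i : ℝ) ∧ (ap.2 i : ℝ) ≤ 2 * P i ∧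
      0 ≤ ap.1 i ∧ ap.1 i < (ap.2 i : ℤ) ∧
      (N i - (ap.1 i : ℝ) * (q i : ℝ)) / (ap.2 i : ℝ) - H i / P i < (m i : ℝ) ∧
      (m i : ℝ) ≤ (N i - (ap.1 i : ℝ) * (q i : ℝ)) / (ap.2 i : ℝ)}

open Finset
open scoped Classical

/-!
Writing `x = (a, p)` and `c(x) = (N - a q) / p`, `A(m)` is the product over `i` of the number
`F_i(m_i)` of admissible `x` whose window `(c(x) - H_i/P_i, c(x)]` contains `m_i`, so everything
reduces to one coordinate. There `∑ₙ F(n)²` counts pairs `(x, y)` of windows sharing an integer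
`n`, and two windows share at most `H/P + 1` integers. Sharing one forces `|c(x) - c(y)| < H/P`;
as `p p' ≤ 4P²` and `HP < q`, the integer `a p' - a' p` then lies within `4` of `N (p' - p) / q`.
For `p ≠ p'` the map `(a, a') ↦ a p' - a' p` is injective on `[0, p) × [0, p')` by CRT, so each
pair of primes carries `O(1)` close pairs, and for `p = p'` each `x` has `O(1)` partners. Hence
there are `O(P²)` close pairs and `∑ₙ F(n)² = O(HP)`.
-/

theorem Int.card_le_of_forall_mem_Ioc {s : Finset ℤ} {a b : ℝ} (hab : a ≤ b)
    (hs : ∀ n ∈ s, (n : ℝ) ∈ Set.Ioc a b) : (#s : ℝ) ≤ b - a + 1 := by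
  have hsub : s ⊆ Ioc ⌊a⌋ ⌊b⌋ := fun n hn => by
    obtain ⟨han, hnb⟩ := hs n hn
    exact mem_Ioc.2 ⟨Int.floor_lt.2 han, Int.le_floor.2 hnb⟩
  have hfloor : ⌊a⌋ ≤ ⌊b⌋ := Int.floor_mono hab
  calc (#s : ℝ) ≤ #(Ioc ⌊a⌋ ⌊b⌋) := by exact_mod_cast card_le_card hsub
    _ = ((⌊b⌋ - ⌊a⌋ : ℤ) : ℝ) := by
      rw [Int.card_Ioc, ← Int.cast_natCast, Int.toNat_of_nonneg (by omega)]
    _ ≤ b - a + 1 := by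
      push_cast
      linarith [Int.floor_le b, Int.lt_floor_add_one a]

theorem Int.card_le_of_injOn_of_abs_sub_lt {α : Type*} {s : Finset α} {f : α → ℤ}
    (hf : Set.InjOn f s) {r L : ℝ} (hL : 0 ≤ L) (hfr : ∀ x ∈ s, |r - f x| < L) :
    (#s : ℝ) ≤ 2 * L + 1 := by
  rw [← card_image_of_injOn hf]
  refine (Int.card_le_of_forall_mem_Ioc (a := r - L) (b := r + L) (by linarith) ?_).trans_eq
    (by ring)
  simp only [mem_image, forall_exists_index, and_imp, forall_apply_eq_imp_iff₂]
  intro x hx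
  have := abs_lt.1 (hfr x hx)
  constructor <;> linarith

theorem Int.eq_of_mul_sub_mul_eq {p p' a a' b b' : ℤ} (hpp' : IsCoprime p p')
    (ha : 0 ≤ a ∧ a < p) (hb : 0 ≤ b ∧ b < p) (h : a * p' - a' * p = b * p' - b' * p) :
    a = b ∧ a' = b' := by
  have hdvd : p ∣ (a - b) * p' := ⟨a' - b', by linear_combination h⟩
  have hab : a = b := by
    have := Int.eq_zero_of_abs_lt_dvd (hpp'.dvd_of_dvd_mul_right hdvd) (by rw [abs_lt]; omega)
    omega
  subst hab
  exact ⟨rfl, mul_right_cancel₀ (by omega : p ≠ 0) (by linarith)⟩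

theorem Set.ncard_setOf_forall_mk_mem {ι α β : Type*} [Fintype ι] (s : ι → Finset (α × β)) :
    {ab : (ι → α) × (ι → β) | ∀ i, (ab.1 i, ab.2 i) ∈ s i}.ncard = ∏ i, #(s i) := by
  let e := Equiv.arrowProdEquivProdArrow ι (fun _ => α) (fun _ => β)
  have : {ab : (ι → α) × (ι → β) | ∀ i, (ab.1 i, ab.2 i) ∈ s i} = e '' ↑(Fintype.piFinset s) := by
    rw [e.image_eq_preimage_symm]
    ext ab
    simp [e, Equiv.arrowProdEquivProdArrow]
  rw [this, Set.ncard_image_of_injective _ e.injective, Set.ncard_coe_finset,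
    Fintype.card_piFinset]

namespace Acount

section OneDimensional

noncomputable def center (q : ℕ) (N : ℝ) (x : ℤ × ℕ) : ℝ := (N - x.1 * q) / x.2

def IsAdmissible (P : ℝ) (x : ℤ × ℕ) : Prop :=
  x.2.Prime ∧ P < x.2 ∧ (x.2 : ℝ) ≤ 2 * P ∧ 0 ≤ x.1 ∧ x.1 < x.2

noncomputable def admissible (P : ℝ) : Finset (ℤ × ℕ) :=
  (Icc 0 ⌊2 * P⌋ ×ˢ Icc 0 ⌊2 * P⌋₊).filter (IsAdmissible P)

def window (q : ℕ) (N H P : ℝ) (x : ℤ × ℕ) : Set ℝ :=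
  Set.Ioc (center q N x - H / P) (center q N x)

noncomputable def fiber (q : ℕ) (N H P : ℝ) (n : ℤ) : Finset (ℤ × ℕ) :=
  (admissible P).filter fun x => (n : ℝ) ∈ window q N H P x

variable {q : ℕ} {N H P : ℝ} {n : ℤ} {x y : ℤ × ℕ}

theorem mem_admissible : x ∈ admissible P ↔ IsAdmissible P x := by
  refine ⟨fun hx => (mem_filter.1 hx).2, fun hx => mem_filter.2 ⟨?_, hx⟩⟩
  obtain ⟨-, -, hp2P, ha0, hap⟩ := hx
  have hp : (x.2 : ℤ) ≤ ⌊2 * P⌋ := Int.le_floor.2 (by exact_mod_cast hp2P)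
  exact mem_product.2 ⟨mem_Icc.2 ⟨ha0, by omega⟩, mem_Icc.2 ⟨Nat.zero_le _, Nat.le_floor hp2P⟩⟩

theorem mem_fiber : x ∈ fiber q N H P n ↔ IsAdmissible P x ∧ (n : ℝ) ∈ window q N H P x := by
  rw [fiber, mem_filter, mem_admissible]

theorem abs_le_two_mul_of_mem_fiber (hN0 : 0 ≤ N) (hNq : N < q) (hP1 : 1 ≤ P)
    (hHP : H * P < q) (hx : x ∈ fiber q N H P n) : |n| ≤ 2 * (q : ℤ) := by
  obtain ⟨⟨-, hPp, -, ha0, hap⟩, hnc, hcn⟩ := mem_fiber.1 hx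
  have hp : (0 : ℝ) < x.2 := by linarith
  have ha0 : (0 : ℝ) ≤ x.1 := by exact_mod_cast ha0
  have hap : (x.1 : ℝ) + 1 ≤ x.2 := by exact_mod_cast hap
  have hcN : center q N x ≤ N := by
    rw [center, div_le_iff₀ hp]; nlinarith
  have hcq : -(q : ℝ) ≤ center q N x := by
    rw [center, le_div_iff₀ hp]; nlinarith
  have hHq : H / P < q := by
    rcases le_or_gt H 0 with hH | hH
    · linarith [div_nonpos_of_nonpos_of_nonneg hH (by linarith : (0 : ℝ) ≤ P)]
    · nlinarith [div_le_self hH.le hP1]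
  have hlo : -(2 * (q : ℝ)) ≤ n := by linarith
  have hhi : (n : ℝ) ≤ 2 * q := by linarith
  exact abs_le.2 ⟨by exact_mod_cast hlo, by exact_mod_cast hhi⟩

def cross (x y : ℤ × ℕ) : ℤ := x.1 * y.2 - y.1 * x.2

noncomputable def closePairs (q : ℕ) (N H P : ℝ) : Finset ((ℤ × ℕ) × (ℤ × ℕ)) :=
  (admissible P ×ˢ admissible P).filter fun xy => |center q N xy.1 - center q N xy.2| < H / P

theorem center_sub_center (hx : x.2 ≠ 0) (hy : y.2 ≠ 0) :
    center q N x - center q N y = (N * (y.2 - x.2) - q * cross x y) / (x.2 * y.2) := by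
  rw [center, center, cross]
  field_simp
  push_cast
  ring

theorem abs_sub_cross_lt (hq : 0 < q) (hHP : H * P < q) (hx : IsAdmissible P x)
    (hy : IsAdmissible P y) (hxy : |center q N x - center q N y| < H / P) :
    |N * (y.2 - x.2) / q - cross x y| < 4 := by
  obtain ⟨-, hPp, hp2P, -, -⟩ := hx
  obtain ⟨-, hPp', hp'2P, -, -⟩ := hy
  have hHP0 : 0 < H / P := (abs_nonneg _).trans_lt hxy
  have hP : 0 < P := by linarith
  have hp : (0 : ℝ) < x.2 := by linarith
  have hp' : (0 : ℝ) < y.2 := by linarith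
  have hq : (0 : ℝ) < q := by exact_mod_cast hq
  rw [center_sub_center (by exact_mod_cast hp.ne') (by exact_mod_cast hp'.ne'), abs_div,
    abs_of_pos (mul_pos hp hp'), div_lt_iff₀ (mul_pos hp hp')] at hxy
  have hpp' : H / P * (x.2 * y.2) ≤ 4 * (H * P) := calc
    H / P * (x.2 * y.2) ≤ H / P * (2 * P * (2 * P)) := by gcongr
    _ = 4 * (H * P) := by field_simp; ring
  rw [show N * (y.2 - x.2) / q - cross x y = (N * (y.2 - x.2) - q * cross x y) / q by
    field_simp, abs_div, abs_of_pos hq, div_lt_iff₀ hq]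
  linarith

theorem mem_closePairs {xy : (ℤ × ℕ) × (ℤ × ℕ)} : xy ∈ closePairs q N H P ↔
    IsAdmissible P xy.1 ∧ IsAdmissible P xy.2 ∧
      |center q N xy.1 - center q N xy.2| < H / P := by
  rw [closePairs, mem_filter, mem_product, mem_admissible, mem_admissible, and_assoc]

theorem card_closePairs_filter_eq_le (hq : 0 < q) (hHP : H * P < q) :
    #((closePairs q N H P).filter fun xy => xy.1.2 = xy.2.2) ≤ 9 * #(admissible P) := by
  refine card_le_mul_card_image_of_maps_to (f := Prod.fst) (fun xy hxy => ?_) 9 fun x _ => ?_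
  · exact mem_admissible.2 (mem_closePairs.1 (mem_filter.1 hxy).1).1
  set S := ((closePairs q N H P).filter fun xy => xy.1.2 = xy.2.2).filter fun xy => xy.1 = x
  have hS : ∀ xy ∈ S, xy ∈ closePairs q N H P ∧ xy.1.2 = xy.2.2 ∧ xy.1 = x := by
    simp [S, and_assoc]
  have hinj : Set.InjOn (fun xy : (ℤ × ℕ) × (ℤ × ℕ) => cross xy.1 xy.2) S := by
    rintro ⟨x₁, y₁⟩ h₁ ⟨x₂, y₂⟩ h₂ hc
    obtain ⟨h, hp₁, hx₁⟩ := hS _ h₁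
    obtain ⟨-, hp₂, hx₂⟩ := hS _ h₂
    dsimp only at hp₁ hp₂ hx₁ hx₂ hc
    obtain rfl : x₁ = x₂ := hx₁.trans hx₂.symm
    have hp : (x₁.2 : ℤ) ≠ 0 := by exact_mod_cast (mem_closePairs.1 h).1.1.ne_zero
    rw [cross, cross, ← hp₁, ← hp₂] at hc
    exact Prod.ext rfl (Prod.ext (mul_right_cancel₀ hp (by linarith)) (hp₁.symm.trans hp₂))
  have := Int.card_le_of_injOn_of_abs_sub_lt hinj (r := 0) (L := 4) (by norm_num) fun xy hxy => by
    obtain ⟨hxy, hp, -⟩ := hS xy hxy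
    obtain ⟨hx, hy, hc⟩ := mem_closePairs.1 hxy
    simpa [hp] using abs_sub_cross_lt (N := N) hq hHP hx hy hc
  have : (#S : ℝ) ≤ 9 := by linarith
  exact_mod_cast this

theorem card_closePairs_filter_ne_le (hq : 0 < q) (hHP : H * P < q) :
    #((closePairs q N H P).filter fun xy => xy.1.2 ≠ xy.2.2) ≤
      9 * #(Icc 0 ⌊2 * P⌋₊ ×ˢ Icc 0 ⌊2 * P⌋₊) := by
  refine card_le_mul_card_image_of_maps_to (f := fun xy => (xy.1.2, xy.2.2))
    (fun xy hxy => ?_) 9 fun pp _ => ?_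
  · obtain ⟨⟨-, -, hp, -⟩, ⟨-, -, hp', -⟩, -⟩ := mem_closePairs.1 (mem_filter.1 hxy).1
    exact mem_product.2 ⟨mem_Icc.2 ⟨Nat.zero_le _, Nat.le_floor hp⟩,
      mem_Icc.2 ⟨Nat.zero_le _, Nat.le_floor hp'⟩⟩
  obtain ⟨p, p'⟩ := pp
  set S := ((closePairs q N H P).filter fun xy => xy.1.2 ≠ xy.2.2).filter
    fun xy => (xy.1.2, xy.2.2) = (p, p')
  have hS : ∀ xy ∈ S, xy ∈ closePairs q N H P ∧ p ≠ p' ∧ xy.1.2 = p ∧ xy.2.2 = p' := by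
    intro xy hxy
    simp only [S, mem_filter, Prod.mk.injEq] at hxy
    obtain ⟨⟨h, hne⟩, rfl, rfl⟩ := hxy
    exact ⟨h, hne, rfl, rfl⟩
  have hinj : Set.InjOn (fun xy : (ℤ × ℕ) × (ℤ × ℕ) => cross xy.1 xy.2) S := by
    intro xy₁ h₁ xy₂ h₂ hc
    obtain ⟨h, hne, hp₁, hp₁'⟩ := hS _ h₁
    obtain ⟨h', -, hp₂, hp₂'⟩ := hS _ h₂
    obtain ⟨⟨hp, -, -, ha₁⟩, ⟨hp', -⟩, -⟩ := mem_closePairs.1 h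
    obtain ⟨⟨-, -, -, ha₂⟩, -, -⟩ := mem_closePairs.1 h'
    rw [hp₁] at hp ha₁
    rw [hp₁'] at hp'
    rw [hp₂] at ha₂
    simp only [cross, hp₁, hp₁', hp₂, hp₂'] at hc
    have hcop : IsCoprime (p : ℤ) p' :=
      Nat.isCoprime_iff_coprime.2 ((Nat.coprime_primes hp hp').2 hne)
    obtain ⟨h₁, h₂⟩ := Int.eq_of_mul_sub_mul_eq hcop ha₁ ha₂ hc
    exact Prod.ext (Prod.ext h₁ (hp₁.trans hp₂.symm)) (Prod.ext h₂ (hp₁'.trans hp₂'.symm))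
  have := Int.card_le_of_injOn_of_abs_sub_lt hinj (r := N * (p' - p) / q) (L := 4) (by norm_num)
    fun xy hxy => by
      obtain ⟨hxy, -, hp, hp'⟩ := hS xy hxy
      obtain ⟨hx, hy, hc⟩ := mem_closePairs.1 hxy
      have := abs_sub_cross_lt hq hHP hx hy hc
      rw [hp, hp'] at this
      exact this
  have : (#S : ℝ) ≤ 9 := by linarith
  exact_mod_cast this

theorem card_admissible_le (hP : 1 ≤ P) : (#(admissible P) : ℝ) ≤ 9 * P ^ 2 := by
  have hA : (#(Icc (0 : ℤ) ⌊2 * P⌋) : ℝ) ≤ 2 * P + 1 := by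
    rw [Int.card_Icc, sub_zero, ← Int.cast_natCast, Int.toNat_of_nonneg (by positivity)]
    push_cast
    linarith [Int.floor_le (2 * P)]
  have hB : (#(Icc 0 ⌊2 * P⌋₊) : ℝ) ≤ 2 * P + 1 := by
    rw [Nat.card_Icc]
    push_cast
    linarith [Nat.floor_le (by positivity : 0 ≤ 2 * P)]
  calc (#(admissible P) : ℝ) ≤ #(Icc (0 : ℤ) ⌊2 * P⌋ ×ˢ Icc 0 ⌊2 * P⌋₊) := by
        exact_mod_cast card_filter_le _ _
    _ ≤ (2 * P + 1) * (2 * P + 1) := by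
        rw [card_product, Nat.cast_mul]
        gcongr
    _ ≤ 9 * P ^ 2 := by nlinarith

theorem card_closePairs_le (hq : 0 < q) (hP : 1 ≤ P) (hHP : H * P < q) :
    (#(closePairs q N H P) : ℝ) ≤ 162 * P ^ 2 := by
  have hW : (#(Icc 0 ⌊2 * P⌋₊) : ℝ) ≤ 3 * P := by
    rw [Nat.card_Icc]
    push_cast
    linarith [Nat.floor_le (by positivity : 0 ≤ 2 * P)]
  have heq := card_closePairs_filter_eq_le (N := N) hq hHP
  have hne := card_closePairs_filter_ne_le (N := N) hq hHP
  rw [card_product] at hne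
  calc (#(closePairs q N H P) : ℝ)
      = #((closePairs q N H P).filter fun xy => xy.1.2 = xy.2.2) +
          #((closePairs q N H P).filter fun xy => xy.1.2 ≠ xy.2.2) := by
        rw [← Nat.cast_add, card_filter_add_card_filter_not]
    _ ≤ 9 * #(admissible P) + 9 * (#(Icc 0 ⌊2 * P⌋₊) * #(Icc 0 ⌊2 * P⌋₊)) := by
        gcongr <;> exact_mod_cast ‹_›
    _ ≤ 9 * (9 * P ^ 2) + 9 * (3 * P * (3 * P)) := by
        gcongr
        exact card_admissible_le hP
    _ = 162 * P ^ 2 := by ring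

theorem sum_card_fiber_sq_le (hP : 1 ≤ P) (hPH : P ≤ H) (hHP : H * P < q)
    (s : Finset ℤ) : ∑ n ∈ s, (#(fiber q N H P n) : ℝ) ^ 2 ≤ 324 * (H * P) := by
  have hq : 0 < q := by exact_mod_cast (by nlinarith : (0 : ℝ) < q)
  let r (n : ℤ) (xy : (ℤ × ℕ) × (ℤ × ℕ)) : Prop :=
    (n : ℝ) ∈ window q N H P xy.1 ∧ (n : ℝ) ∈ window q N H P xy.2
  have hHP0 : 0 ≤ H / P := div_nonneg (by linarith) (by linarith)
  have hdouble : ∑ n ∈ s, #(fiber q N H P n) ^ 2 =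
      ∑ xy ∈ admissible P ×ˢ admissible P, #(s.filter fun n => r n xy) := by
    refine (sum_congr rfl fun n _ => ?_).trans
      (sum_card_bipartiteAbove_eq_sum_card_bipartiteBelow r)
    rw [bipartiteAbove, filter_product (p := fun x => (n : ℝ) ∈ window q N H P x)
      (q := fun x => (n : ℝ) ∈ window q N H P x), card_product, sq]
    rfl
  have hclose : ∀ xy ∈ admissible P ×ˢ admissible P,
      #(s.filter fun n => r n xy) ≠ 0 → xy ∈ closePairs q N H P := by
    intro xy hxy hne
    obtain ⟨n, hn⟩ := card_ne_zero.1 hne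
    obtain ⟨-, ⟨h₁, h₂⟩, h₃, h₄⟩ := mem_filter.1 hn
    exact mem_filter.2 ⟨hxy, abs_lt.2 ⟨by linarith, by linarith⟩⟩
  calc ∑ n ∈ s, (#(fiber q N H P n) : ℝ) ^ 2
      = ∑ xy ∈ admissible P ×ˢ admissible P, (#(s.filter fun n => r n xy) : ℝ) := by
        exact_mod_cast hdouble
    _ = ∑ xy ∈ closePairs q N H P, (#(s.filter fun n => r n xy) : ℝ) := by
        rw [closePairs, sum_filter_of_ne fun xy hxy hne => ?_]
        exact mem_filter.1 (hclose xy hxy (by exact_mod_cast hne)) |>.2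
    _ ≤ ∑ _xy ∈ closePairs q N H P, (H / P + 1) := by
        refine sum_le_sum fun xy _ => ?_
        refine (Int.card_le_of_forall_mem_Ioc (by linarith)
          fun n hn => (mem_filter.1 hn).2.1).trans_eq ?_
        ring
    _ = #(closePairs q N H P) * (H / P + 1) := by rw [sum_const, nsmul_eq_mul]
    _ ≤ 162 * P ^ 2 * (2 * (H / P)) := by
        gcongr
        · exact card_closePairs_le hq hP hHP
        · linarith [(one_le_div (by linarith)).2 hPH]
    _ = 324 * (H * P) := by field_simp; ring

end OneDimensional

variable {k : ℕ} {q : Fin k → ℕ} {N H P : Fin k → ℝ}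

theorem eq_prod_card_fiber (m : Fin k → ℤ) :
    Acount q N H P m = ∏ i, #(fiber (q i) (N i) (H i) (P i) (m i)) := by
  rw [Acount, ← Set.ncard_setOf_forall_mk_mem]
  congr! 4 with ap i
  simp only [mem_fiber, IsAdmissible, window, center, Set.mem_Ioc]
  tauto

theorem abs_le_two_mul_of_ne_zero (hN : ∀ i, 0 ≤ N i ∧ N i < q i)
    (hHP : ∀ i, 1 ≤ P i ∧ P i ≤ H i ∧ H i * P i < q i) {m : Fin k → ℤ}
    (hm : Acount q N H P m ≠ 0) (i : Fin k) : |m i| ≤ 2 * (q i : ℤ) := by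
  rw [eq_prod_card_fiber, prod_ne_zero_iff] at hm
  obtain ⟨x, hx⟩ := card_ne_zero.1 (hm i (mem_univ i))
  exact abs_le_two_mul_of_mem_fiber (hN i).1 (hN i).2 (hHP i).1 (hHP i).2.2 hx

theorem sum_sq_le (hHP : ∀ i, 1 ≤ P i ∧ P i ≤ H i ∧ H i * P i < q i) (t : Fin k → Finset ℤ) :
    ∑ m ∈ Fintype.piFinset t, (Acount q N H P m : ℝ) ^ 2 ≤ 324 ^ k * (∏ i, H i) * ∏ i, P i := by
  calc ∑ m ∈ Fintype.piFinset t, (Acount q N H P m : ℝ) ^ 2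
      = ∏ i, ∑ n ∈ t i, (#(fiber (q i) (N i) (H i) (P i) n) : ℝ) ^ 2 := by
        simp only [prod_univ_sum, eq_prod_card_fiber, Nat.cast_prod, prod_pow]
    _ ≤ ∏ i, 324 * (H i * P i) :=
        prod_le_prod (fun i _ => sum_nonneg fun n _ => sq_nonneg _)
          fun i _ => sum_card_fiber_sq_le (hHP i).1 (hHP i).2.1 (hHP i).2.2 (t i)
    _ = 324 ^ k * (∏ i, H i) * ∏ i, P i := by
        rw [prod_mul_distrib, prod_mul_distrib, prod_const, card_univ, Fintype.card_fin, mul_assoc]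

end Acount

theorem stmt_8_general (k : ℕ) :
    ∃ C : ℝ, 0 < C ∧
      ∀ (q : Fin k → ℕ), (∀ i, (q i).Prime) →
      ∀ (N H P : Fin k → ℝ), (∀ i, 0 ≤ N i ∧ N i < (q i : ℝ)) →
        (∀ i, 1 ≤ P i ∧ P i ≤ H i ∧ H i * P i < (q i : ℝ)) →
        (∀ m : Fin k → ℤ, Acount q N H P m ≠ 0 → ∀ i, |m i| ≤ 2 * (q i : ℤ)) ∧
        (∑' m : Fin k → ℤ, (Acount q N H P m : ℝ)) ≤
          (∑' m : Fin k → ℤ, (Acount q N H P m : ℝ) ^ 2) ∧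
        (∑' m : Fin k → ℤ, (Acount q N H P m : ℝ) ^ 2) ≤ C * (∏ i, H i) * (∏ i, P i) := by
  refine ⟨324 ^ k, by positivity, fun q _ N H P hN hHP => ?_⟩
  have hsupp : ∀ m, Acount q N H P m ≠ 0 → ∀ i, |m i| ≤ 2 * (q i : ℤ) :=
    fun _ => Acount.abs_le_two_mul_of_ne_zero hN hHP
  set B := Fintype.piFinset fun i => Icc (-(2 * (q i : ℤ))) (2 * q i)
  have hB : ∀ m ∉ B, Acount q N H P m = 0 := fun m hm => by_contra fun h =>
    hm (Fintype.mem_piFinset.2 fun i => mem_Icc.2 (abs_le.1 (hsupp m h i)))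
  rw [tsum_eq_sum (s := B) fun m hm => by simp [hB m hm],
    tsum_eq_sum (s := B) fun m hm => by simp [hB m hm]]
  refine ⟨hsupp, sum_le_sum fun m _ => ?_, Acount.sum_sq_le hHP _⟩
  exact_mod_cast Nat.le_self_pow two_ne_zero _

theorem stmt_8 (k : ℕ) (hk : 0 < k) :
    ∃ C : ℝ, 0 < C ∧
      ∀ (q : Fin k → ℕ), (∀ i, (q i).Prime) →
      ∀ (N H P : Fin k → ℝ), (∀ i, 0 ≤ N i ∧ N i < (q i : ℝ)) →
        (∀ i, 1 ≤ P i ∧ P i ≤ H i ∧ H i * P i < (q i : ℝ)) →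
        (∀ m : Fin k → ℤ, Acount q N H P m ≠ 0 → ∀ i, |m i| ≤ 2 * (q i : ℤ)) ∧
        (∑' m : Fin k → ℤ, (Acount q N H P m : ℝ)) ≤
          (∑' m : Fin k → ℤ, (Acount q N H P m : ℝ) ^ 2) ∧
        (∑' m : Fin k → ℤ, (Acount q N H P m : ℝ) ^ 2) ≤ C * (∏ i, H i) * (∏ i, P i) :=
  stmt_8_general k
end

section
/- Let k ≥ 1, let N be a tuple of positive real numbers, and let a(n) be complex numbers indexed by n ∈ ℤ^k ∩ (0,N]. Let b be a C^k function on ℝ^k such that there is a tuple B = (B_1,…,B_k) of positive reals with |∂^{|κ|} b / (∂x_1^{κ_1}⋯∂x_k^{κ_k})(x)| ≤ B_1^{κ_1}⋯B_k^{κ_k} for all x ∈ (0,N] and every multi-index κ = (κ_1,…,κ_k) with each κ_i ∈ {0,1}. Then |Σ_{n ∈ ℤ^k ∩ (0,N]} a(n) b(n)| ≤ Σ_{J ⊆ {1,…,k}} (∏_{j∈J} B_j) ∫⋯∫_{(0,N_j], j∈J} |A_{(ᶜJ),(J)}(N_{(ᶜJ)}, t_{(J)})| dt_{(J)}, where ᶜJ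 = {1,…,k} \ J and for a partition I ∪ J of {1,…,k}, A_{(I),(J)}(t_{(I)}, s_{(J)}) = Σ_{0 < n_j ≤ t_j for j∈I} Σ_{0 < n_j ≤ s_j for j∈J} a(n). -/
open scoped BigOperators
open MeasureTheory

/-- The partial derivative of `b` in direction `i`. -/
noncomputable def pderivI {k : ℕ} (i : Fin k) (b : (Fin k → ℝ) → ℂ) : (Fin k → ℝ) → ℂ :=
  fun x => fderiv ℝ b x (Pi.single i 1)

/-- The mixed partial derivative `∂^{|S|} b / ∏_{i ∈ S} ∂x_i` for a set `S` of coordinates. -/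
noncomputable def mixedPartial {k : ℕ} (S : Finset (Fin k)) (b : (Fin k → ℝ) → ℂ) :
    (Fin k → ℝ) → ℂ :=
  (S.sort (· ≤ ·)).foldr pderivI b

/-!
Partial summation, one coordinate at a time. For a coordinate `i`, write
`b(…, nᵢ, …) = b(…, Nᵢ, …) - ∫_{nᵢ}^{Nᵢ} ∂ᵢb(…, s, …) ds` and sum against `a`. The boundary term
is a sum of the same shape with one coordinate fewer; the other term is `∫_0^{Nᵢ}` of such a sum
with `b` replaced by `∂ᵢb` and `a` by its truncation to `nᵢ ≤ s`, whose partial sums are those of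
`a` with the `i`-th corner moved from `Nᵢ` to `s`. Inducting over the coordinates in increasing
order, so that the mixed partials of `∂ᵢb` are mixed partials of `b`, every set `J` of integrated
coordinates contributes `∏_{j ∈ J} B_j` times the iterated integral of `|A|` over `(0, N_J]`.
These iterated integrals are taken as marginals (`lmarginal`) of `‖A‖ₑ`, so that Tonelli is
`lmarginal_insert` and their integrability only matters in the final passage to `ℝ`.
-/

open Function
open scoped ENNReal

theorem Finset.sort_insert_of_forall_lt {α : Type*} [LinearOrder α] {s : Finset α} {a : α}
    (h : ∀ x ∈ s, x < a) : (insert a s).sort (· ≤ ·) = s.sort (· ≤ ·) ++ [a] := by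
  refine (Finset.sortedLT_sort _).eq_of_mem_iff ?_ fun x => by simp [or_comm]
  rw [List.sortedLT_iff_pairwise, List.pairwise_append]
  exact ⟨(Finset.sortedLT_sort s).pairwise, by simp, fun x hx y hy => by simp_all⟩

section Derivatives

variable {k : ℕ}

theorem mixedPartial_insert_of_forall_lt {S : Finset (Fin k)} {i : Fin k} (h : ∀ j ∈ S, j < i)
    (b : (Fin k → ℝ) → ℂ) : mixedPartial (insert i S) b = mixedPartial S (pderivI i b) := by
  rw [mixedPartial, Finset.sort_insert_of_forall_lt h, List.foldr_append]
  rfl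

theorem contDiff_pderivI {n : WithTop ℕ∞} {b : (Fin k → ℝ) → ℂ} (hb : ContDiff ℝ (n + 1) b)
    (i : Fin k) : ContDiff ℝ n (pderivI i b) :=
  (hb.fderiv_right le_rfl).clm_apply contDiff_const

theorem continuous_pderivI {b : (Fin k → ℝ) → ℂ} (hb : ContDiff ℝ 1 b) (i : Fin k) :
    Continuous (pderivI i b) :=
  (hb.continuous_fderiv one_ne_zero).clm_apply continuous_const

theorem hasDerivAt_update_pderivI {b : (Fin k → ℝ) → ℂ} (hb : Differentiable ℝ b)
    (x : Fin k → ℝ) (i : Fin k) (s : ℝ) :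
    HasDerivAt (fun u => b (update x i u)) (pderivI i b (update x i s)) s :=
  (hb _).hasFDerivAt.comp_hasDerivAt s (hasDerivAt_update x i s)

end Derivatives

theorem setIntegral_Ioc_ite_le {E : Type*} [NormedAddCommGroup E] [NormedSpace ℝ E] (f : ℝ → E)
    {z M : ℝ} (hz : 0 < z) (hzM : z ≤ M) :
    ∫ u in Set.Ioc 0 M, (if z ≤ u then f u else 0) = ∫ u in z..M, f u := by
  have hinter : Set.Ioc 0 M ∩ Set.Ici z = Set.Icc z M := Set.ext fun u =>
    ⟨fun ⟨⟨_, huM⟩, hzu⟩ => ⟨hzu, huM⟩, fun ⟨hzu, huM⟩ => ⟨⟨hz.trans_le hzu, huM⟩, hzu⟩⟩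
  have hind : (fun u => if z ≤ u then f u else 0) = (Set.Ici z).indicator f := by
    ext u
    simp [Set.indicator_apply]
  rw [hind, setIntegral_indicator measurableSet_Ici, hinter, integral_Icc_eq_integral_Ioc,
    intervalIntegral.integral_of_le hzM]

theorem lmarginal_restrict_pi {δ : Type*} [DecidableEq δ] {X : δ → Type*}
    [∀ i, MeasurableSpace (X i)] (μ : ∀ i, Measure (X i)) [∀ i, SigmaFinite (μ i)]
    (s : ∀ i, Set (X i)) (J : Finset δ) (f : (∀ i, X i) → ℝ≥0∞) (x : ∀ i, X i) :
    (∫⋯∫⁻_J, f ∂fun i => (μ i).restrict (s i)) x =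
      ∫⁻ t in Set.univ.pi (fun j : J => s j), f (updateFinset x J t)
        ∂Measure.pi fun j : J => μ j := by
  rw [lmarginal, Measure.restrict_pi_pi]

section PartialSum

variable {ι E : Type*} [Fintype ι] [DecidableEq ι]

noncomputable def partialSum [AddCommMonoid E] (a : (ι → ℤ) → E) (x : ι → ℝ) : E :=
  ∑ n ∈ Fintype.piFinset fun i => Finset.Ioc 0 ⌊x i⌋, a n

theorem partialSum_ite_le [AddCommMonoid E] (a : (ι → ℤ) → E) {x : ι → ℝ} {i : ι} {s : ℝ}
    (hs : s ≤ x i) :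
    partialSum (fun n => if (n i : ℝ) ≤ s then a n else 0) x = partialSum a (update x i s) := by
  have hfloor : ⌊s⌋ ≤ ⌊x i⌋ := Int.floor_le_floor hs
  rw [partialSum, partialSum, ← Finset.sum_filter]
  congr 1
  ext n
  simp only [Finset.mem_filter, Fintype.mem_piFinset, Finset.mem_Ioc, update_apply,
    ← Int.le_floor]
  grind

variable [NormedAddCommGroup E]

theorem stronglyMeasurable_partialSum (a : (ι → ℤ) → E) : StronglyMeasurable (partialSum a) :=
  (StronglyMeasurable.of_discrete (f := fun m : ι → ℤ =>
      ∑ n ∈ Fintype.piFinset fun i => Finset.Ioc 0 (m i), a n)).comp_measurable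
    (measurable_pi_lambda _ fun i => (measurable_pi_apply i).floor)

theorem measurable_enorm_partialSum (a : (ι → ℤ) → E) :
    Measurable fun x : ι → ℝ => ‖partialSum a x‖ₑ :=
  (stronglyMeasurable_partialSum a).enorm

theorem enorm_partialSum_le (a : (ι → ℤ) → E) {x N : ι → ℝ} (hx : x ≤ N) :
    ‖partialSum a x‖ₑ ≤ ∑ n ∈ Fintype.piFinset fun i => Finset.Ioc 0 ⌊N i⌋, ‖a n‖ₑ :=
  (enorm_sum_le _ _).trans <| Finset.sum_le_sum_of_subset <|
    Fintype.piFinset_subset _ _ fun i => Finset.Ioc_subset_Ioc_right (Int.floor_mono (hx i))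

theorem lmarginal_enorm_partialSum_ite_le (μ : ι → Measure ℝ) (a : (ι → ℤ) → E)
    {J : Finset ι} {i : ι} (hi : i ∉ J) (x : ι → ℝ) {s : ℝ} (hs : s ≤ x i) :
    (∫⋯∫⁻_J, (fun y => ‖partialSum (fun n => if (n i : ℝ) ≤ s then a n else 0) y‖ₑ) ∂μ) x =
      (∫⋯∫⁻_J, (fun y => ‖partialSum a y‖ₑ) ∂μ) (update x i s) := by
  refine lintegral_congr fun t => ?_
  have hxi : updateFinset x J t i = x i := by simp [updateFinset, hi]
  have hcomm : update (updateFinset x J t) i s = updateFinset (update x i s) J t := by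
    ext j
    by_cases hj : j = i
    · subst hj; simp [updateFinset, hi]
    · simp [updateFinset, hj]
  dsimp only
  rw [partialSum_ite_le a (hxi.symm ▸ hs), hcomm]

theorem lmarginal_enorm_partialSum_lt_top (a : (ι → ℤ) → E) (J : Finset ι) (N : ι → ℝ) :
    (∫⋯∫⁻_J, (fun y => ‖partialSum a y‖ₑ) ∂fun i => volume.restrict (Set.Ioc 0 (N i))) N
      < ∞ := by
  have hle : ∀ t ∈ Set.univ.pi fun j : J => Set.Ioc 0 (N j), updateFinset N J t ≤ N := by
    intro t ht i
    by_cases hi : i ∈ J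
    · simpa [updateFinset, hi] using (ht ⟨i, hi⟩ (Set.mem_univ _)).2
    · simp [updateFinset, hi]
  rw [lmarginal_restrict_pi]
  refine (setLIntegral_mono measurable_const fun t ht =>
    enorm_partialSum_le a (hle t ht)).trans_lt ?_
  rw [setLIntegral_const, Measure.pi_pi]
  exact ENNReal.mul_lt_top (ENNReal.sum_lt_top.2 fun n _ => enorm_lt_top)
    (ENNReal.prod_lt_top fun j _ => by simp [Real.volume_Ioc])

theorem integral_norm_partialSum_updateFinset (a : (ι → ℤ) → E) (J : Finset ι) (N : ι → ℝ) :
    ∫ t in Set.univ.pi (fun j : J => Set.Ioc 0 (N j)), ‖partialSum a (updateFinset N J t)‖ =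
      ((∫⋯∫⁻_J, (fun y => ‖partialSum a y‖ₑ)
        ∂fun i => volume.restrict (Set.Ioc 0 (N i))) N).toReal := by
  rw [integral_norm_eq_lintegral_enorm (f := fun t => partialSum a (updateFinset N J t))
    ((stronglyMeasurable_partialSum a).comp_measurable
      measurable_updateFinset).aestronglyMeasurable,
    lmarginal_restrict_pi]
  rfl

/-- With `μ i` Lebesgue measure on `(0, N i]`, `abelBound μ B a univ N` is the right-hand side
of the theorem. -/
noncomputable def abelBound (μ : ι → Measure ℝ) (B : ι → ℝ≥0∞) (a : (ι → ℤ) → E)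
    (T : Finset ι) (x : ι → ℝ) : ℝ≥0∞ :=
  ∑ J ∈ T.powerset, (∏ j ∈ J, B j) * (∫⋯∫⁻_J, (fun y => ‖partialSum a y‖ₑ) ∂μ) x

variable (μ : ι → Measure ℝ) (B : ι → ℝ≥0∞) (a : (ι → ℤ) → E)

theorem abelBound_empty (x : ι → ℝ) : abelBound μ B a ∅ x = ‖partialSum a x‖ₑ := by
  simp [abelBound]

theorem abelBound_ite_le {T : Finset ι} {i : ι} (hi : i ∉ T) {x : ι → ℝ} {s : ℝ}
    (hs : s ≤ x i) :
    abelBound μ B (fun n => if (n i : ℝ) ≤ s then a n else 0) T x =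
      abelBound μ B a T (update x i s) :=
  Finset.sum_congr rfl fun J hJ => by
    rw [lmarginal_enorm_partialSum_ite_le μ a (fun h => hi (Finset.mem_powerset.1 hJ h)) x hs]

variable [∀ i, SigmaFinite (μ i)]

theorem measurable_abelBound (T : Finset ι) : Measurable (abelBound μ B a T) :=
  Finset.measurable_sum _ fun _ _ =>
    ((measurable_enorm_partialSum a).lmarginal μ).const_mul _

theorem abelBound_insert {T : Finset ι} {i : ι} (hi : i ∉ T) (x : ι → ℝ) :
    abelBound μ B a (insert i T) x =
      abelBound μ B a T x + B i * ∫⁻ u, abelBound μ B a T (update x i u) ∂μ i := by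
  have hiJ : ∀ J ∈ T.powerset, i ∉ J := fun J hJ h => hi (Finset.mem_powerset.1 hJ h)
  have hmeas : ∀ J : Finset ι, Measurable fun u =>
      (∫⋯∫⁻_J, (fun y => ‖partialSum a y‖ₑ) ∂μ) (update x i u) :=
    fun J => ((measurable_enorm_partialSum a).lmarginal μ).comp (measurable_update x)
  simp only [abelBound]
  rw [Finset.sum_powerset_insert hi, lintegral_finsetSum _ fun J _ => (hmeas J).const_mul _,
    Finset.mul_sum]
  congr 1
  refine Finset.sum_congr rfl fun J hJ => ?_
  rw [lintegral_const_mul _ (hmeas J),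
    lmarginal_insert _ (measurable_enorm_partialSum a) (hiJ J hJ), Finset.prod_insert (hiJ J hJ)]
  ring

end PartialSum

section AbelSummation

variable {k : ℕ}

theorem sum_mul_update_eq_sub_integral {b : (Fin k → ℝ) → ℂ} (hb : ContDiff ℝ 1 b)
    (a : (Fin k → ℤ) → ℂ) (y : (Fin k → ℤ) → Fin k → ℝ) (i : Fin k) {M : ℝ}
    {s : Finset (Fin k → ℤ)} (hs : ∀ n ∈ s, 0 < n i ∧ (n i : ℝ) ≤ M) :
    ∑ n ∈ s, a n * b (update (y n) i (n i)) =
      ∑ n ∈ s, a n * b (update (y n) i M) -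
        ∫ u in Set.Ioc 0 M, ∑ n ∈ s,
          (if (n i : ℝ) ≤ u then a n else 0) * pderivI i b (update (y n) i u) := by
  have hcont : ∀ n, Continuous fun u => pderivI i b (update (y n) i u) := fun n =>
    (continuous_pderivI hb i).comp (continuous_const.update i continuous_id)
  have hite : ∀ n u, (if (n i : ℝ) ≤ u then a n else 0) * pderivI i b (update (y n) i u) =
      if (n i : ℝ) ≤ u then a n * pderivI i b (update (y n) i u) else 0 := fun n u => by
    rw [ite_mul, zero_mul]
  simp_rw [hite]
  rw [integral_finsetSum _ fun n _ => ?_, ← Finset.sum_sub_distrib]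
  · refine Finset.sum_congr rfl fun n hn => ?_
    have hn0 : (0 : ℝ) < n i := by exact_mod_cast (hs n hn).1
    rw [setIntegral_Ioc_ite_le _ hn0 (hs n hn).2, intervalIntegral.integral_const_mul,
      intervalIntegral.integral_eq_sub_of_hasDerivAt
        (fun u _ => hasDerivAt_update_pderivI (hb.differentiable one_ne_zero) _ i u)
        ((hcont n).intervalIntegrable _ _)]
    ring
  · exact ((((continuous_const (y := a n)).mul (hcont n)).integrableOn_Ioc).indicator
      (measurableSet_Ici (a := (n i : ℝ)))).congr
      (ae_of_all _ fun u => by simp [Set.indicator_apply])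


theorem enorm_mixedPartial_pderivI_le {T : Finset (Fin k)} {i : Fin k} (hmax : ∀ j ∈ T, j < i)
    {b : (Fin k → ℝ) → ℂ} {U : Set (Fin k → ℝ)} {B : Fin k → ℝ≥0∞} {C : ℝ≥0∞}
    (hbd : ∀ S ⊆ insert i T, ∀ x ∈ U, ‖mixedPartial S b x‖ₑ ≤ C * ∏ j ∈ S, B j) :
    ∀ S ⊆ T, ∀ x ∈ U, ‖mixedPartial S (pderivI i b) x‖ₑ ≤ C * B i * ∏ j ∈ S, B j := by
  intro S hS x hx
  rw [← mixedPartial_insert_of_forall_lt fun j hj => hmax j (hS hj), mul_assoc,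
    ← Finset.prod_insert fun h => (hmax i (hS h)).false]
  exact hbd _ (Finset.insert_subset_insert i hS) x hx

theorem enorm_sum_mul_piecewise_le {N : Fin k → ℝ} (hN : ∀ i, 0 < N i) (B : Fin k → ℝ≥0∞)
    (T : Finset (Fin k)) (a : (Fin k → ℤ) → ℂ) (b : (Fin k → ℝ) → ℂ) (c : Fin k → ℝ) (C : ℝ≥0∞)
    (hb : ContDiff ℝ T.card b) (hc : c ∈ Set.univ.pi fun i => Set.Ioc 0 (N i))
    (hbd : ∀ S ⊆ T, ∀ x ∈ Set.univ.pi fun i => Set.Ioc 0 (N i),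
      ‖mixedPartial S b x‖ₑ ≤ C * ∏ j ∈ S, B j) :
    ‖∑ n ∈ Fintype.piFinset fun i => Finset.Ioc 0 ⌊N i⌋,
        a n * b (T.piecewise (fun i => (n i : ℝ)) c)‖ₑ ≤
      C * abelBound (fun i => volume.restrict (Set.Ioc 0 (N i))) B a T N := by
  set μ : Fin k → Measure ℝ := fun i => volume.restrict (Set.Ioc 0 (N i))
  induction T using Finset.induction_on_max generalizing a b c C with
  | empty =>
    have hbc : ‖b c‖ₑ ≤ C := by simpa [mixedPartial] using hbd ∅ subset_rfl c hc
    rw [abelBound_empty, mul_comm, partialSum]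
    simp only [Finset.piecewise_empty, ← Finset.sum_mul, enorm_mul]
    gcongr
  | insert i T hmax IH =>
    have hi : i ∉ T := fun h => (hmax i h).false
    rw [Finset.card_insert_of_notMem hi, Nat.cast_add, Nat.cast_one] at hb
    have hlattice : ∀ n ∈ Fintype.piFinset fun i => Finset.Ioc 0 ⌊N i⌋,
        0 < n i ∧ (n i : ℝ) ≤ N i := fun n hn => by
      have := Finset.mem_Ioc.1 (Fintype.mem_piFinset.1 hn i)
      exact ⟨this.1, Int.le_floor.1 this.2⟩
    have hupdate : ∀ (n : Fin k → ℤ) (u : ℝ), update (T.piecewise (fun i => (n i : ℝ)) c) i u =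
        T.piecewise (fun i => (n i : ℝ)) (update c i u) := fun n u =>
      Finset.update_piecewise_of_notMem T (fun i => (n i : ℝ)) c hi u
    have hcu : ∀ u ∈ Set.Ioc 0 (N i), update c i u ∈ Set.univ.pi fun i => Set.Ioc 0 (N i) :=
      fun u hu => (Set.update_mem_pi_iff_of_mem hc).2 fun _ => hu
    have hboundary := IH a b (update c i (N i)) C hb.of_succ (hcu _ ⟨hN i, le_rfl⟩)
      fun S hS => hbd S (hS.trans (Finset.subset_insert i T))
    have hinterior : ∀ u ∈ Set.Ioc 0 (N i),
        ‖∑ n ∈ Fintype.piFinset fun i => Finset.Ioc 0 ⌊N i⌋,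
          (if (n i : ℝ) ≤ u then a n else 0) *
            pderivI i b (update (T.piecewise (fun i => (n i : ℝ)) c) i u)‖ₑ ≤
        C * B i * abelBound μ B a T (update N i u) := fun u hu => by
      rw [← abelBound_ite_le μ B a hi hu.2]
      simp_rw [hupdate]
      exact IH _ (pderivI i b) (update c i u) (C * B i) (contDiff_pderivI hb i) (hcu u hu)
        (enorm_mixedPartial_pderivI_le hmax hbd)
    simp only [Finset.piecewise_insert]
    rw [sum_mul_update_eq_sub_integral (hb.of_le le_add_self) a _ i hlattice,
      abelBound_insert μ B a hi, mul_add, ← mul_assoc,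
      ← lintegral_const_mul _ (f := fun u => abelBound μ B a T (update N i u))
        ((measurable_abelBound μ B a T).comp (measurable_update N))]
    refine enorm_sub_le.trans (add_le_add ?_ ?_)
    · simpa only [hupdate] using hboundary
    · exact (enorm_integral_le_lintegral_enorm _).trans
        (setLIntegral_mono' measurableSet_Ioc hinterior)

end AbelSummation

theorem stmt_10_general (k : ℕ) (N : Fin k → ℝ) (hN : ∀ i, 0 < N i)
    (a : (Fin k → ℤ) → ℂ) (b : (Fin k → ℝ) → ℂ)
    (B : Fin k → ℝ) (hB : ∀ i, 0 < B i)
    (hb : ContDiff ℝ k b)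
    (hbd : ∀ S : Finset (Fin k), ∀ x : Fin k → ℝ, (∀ i, 0 < x i ∧ x i ≤ N i) →
      ‖mixedPartial S b x‖ ≤ ∏ j ∈ S, B j) :
    ‖∑ n ∈ Fintype.piFinset (fun i => Finset.Ioc (0 : ℤ) ⌊N i⌋),
        a n * b (fun i => (n i : ℝ))‖ ≤
      ∑ J : Finset (Fin k), (∏ j ∈ J, B j) *
        ∫ t in Set.univ.pi (fun j : {i // i ∈ J} => Set.Ioc (0 : ℝ) (N j.1)),
          ‖∑ n ∈ Fintype.piFinset
            (fun i => Finset.Ioc (0 : ℤ) (if h : i ∈ J then ⌊t ⟨i, h⟩⌋ else ⌊N i⌋)), a n‖ := by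
  have key := enorm_sum_mul_piecewise_le hN (fun j => ENNReal.ofReal (B j)) Finset.univ a b N 1
    (by simpa using hb) (fun i _ => ⟨hN i, le_rfl⟩) fun S _ x hx => by
      rw [one_mul, ← ENNReal.ofReal_prod_of_nonneg fun j _ => (hB j).le, ← ofReal_norm]
      exact ENNReal.ofReal_le_ofReal (hbd S x fun i => hx i (Set.mem_univ i))
  simp only [Finset.piecewise_univ, abelBound, Finset.powerset_univ, one_mul] at key
  have hfin : ∀ J : Finset (Fin k), (∏ j ∈ J, ENNReal.ofReal (B j)) *
      (∫⋯∫⁻_J, (fun x => ‖partialSum a x‖ₑ) ∂fun i => volume.restrict (Set.Ioc 0 (N i))) N ≠ ∞ :=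
    fun J => ENNReal.mul_ne_top (ENNReal.prod_ne_top fun j _ => ENNReal.ofReal_ne_top)
      (lmarginal_enorm_partialSum_lt_top a J N).ne
  have hsummand : ∀ (J : Finset (Fin k)) (t : J → ℝ),
      ∑ n ∈ Fintype.piFinset (fun i => Finset.Ioc (0 : ℤ)
        (if h : i ∈ J then ⌊t ⟨i, h⟩⌋ else ⌊N i⌋)), a n = partialSum a (updateFinset N J t) :=
    fun J t => by simp only [partialSum, updateFinset, apply_dite]
  simp_rw [hsummand, integral_norm_partialSum_updateFinset, ← toReal_enorm]
  refine (ENNReal.toReal_mono (ENNReal.sum_ne_top.2 fun J _ => hfin J) key).trans_eq ?_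
  rw [ENNReal.toReal_sum fun J _ => hfin J]
  refine Finset.sum_congr rfl fun J _ => ?_
  rw [ENNReal.toReal_mul, ENNReal.toReal_prod]
  simp_rw [ENNReal.toReal_ofReal (hB _).le]

theorem stmt_10 (k : ℕ) (hk : 0 < k) (N : Fin k → ℝ) (hN : ∀ i, 0 < N i)
    (a : (Fin k → ℤ) → ℂ) (b : (Fin k → ℝ) → ℂ)
    (B : Fin k → ℝ) (hB : ∀ i, 0 < B i)
    (hb : ContDiff ℝ k b)
    (hbd : ∀ S : Finset (Fin k), ∀ x : Fin k → ℝ, (∀ i, 0 < x i ∧ x i ≤ N i) →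
      ‖mixedPartial S b x‖ ≤ ∏ j ∈ S, B j) :
    ‖∑ n ∈ Fintype.piFinset (fun i => Finset.Ioc (0 : ℤ) ⌊N i⌋),
        a n * b (fun i => (n i : ℝ))‖ ≤
      ∑ J : Finset (Fin k), (∏ j ∈ J, B j) *
        ∫ t in Set.univ.pi (fun j : {i // i ∈ J} => Set.Ioc (0 : ℝ) (N j.1)),
          ‖∑ n ∈ Fintype.piFinset
            (fun i => Finset.Ioc (0 : ℤ) (if h : i ∈ J then ⌊t ⟨i, h⟩⌋ else ⌊N i⌋)), a n‖ :=
  stmt_10_general k N hN a b B hB hb hbd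
end

section
/- Let q be a prime and χ a Dirichlet character modulo q of order Δ > 1. Let r ≥ 1 be an integer, let u be a real number with u ≤ q, and let z = (z_1,…,z_{2r}) be a tuple of integers with 0 < z_j ≤ u for each j. Set δ(j) = 1 if j is even and δ(j) = Δ − 1 if j is odd. If the polynomial ∏_{j=1}^{2r}(X + z_j)^{δ(j)}, regarded as a polynomial over 𝔽_q, is a perfect Δ-th power over an algebraic closure of 𝔽_q (equivalently, the multiplicity of each of its roots is divisible by Δ), then z is bad, i.e., for every j ∈ {1,…,2r} there exists ℓ ≠ j with z_ℓ = z_j. -/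
/-!
Since `0 < z ℓ ≤ q`, distinct entries of `z` stay distinct in characteristic `q`. So if `z j`
occurred only once, `-z j` would be a root of the product of multiplicity exactly
`δ(j) ∈ {1, Δ - 1}`, which is not divisible by `Δ`; but every root of `g ^ Δ` has multiplicity
divisible by `Δ`.
-/

open Polynomial

theorem CharP.intCast_injOn_Ioc (R : Type*) [AddGroupWithOne R] (p : ℕ) [CharP R p] :
    Set.InjOn (Int.cast : ℤ → R) (Set.Ioc 0 p) := by
  intro a ⟨ha₀, ha⟩ b ⟨hb₀, hb⟩ hab
  rw [CharP.intCast_eq_intCast R p, Int.modEq_iff_dvd] at hab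
  have : b - a = 0 := Int.eq_zero_of_abs_lt_dvd hab (by rw [abs_lt]; omega)
  omega

theorem Polynomial.rootMultiplicity_prod_X_sub_C_pow {R ι : Type*} [CommRing R] [IsDomain R]
    [DecidableEq R] (s : Finset ι) (f : ι → R) (k : ι → ℕ) (a : R) :
    rootMultiplicity a (∏ i ∈ s, (X - C (f i)) ^ k i) = ∑ i ∈ s with f i = a, k i := by
  have hne : ∏ i ∈ s, (X - C (f i)) ^ k i ≠ 0 :=
    Finset.prod_ne_zero_iff.2 fun i _ => pow_ne_zero _ (X_sub_C_ne_zero _)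
  rw [← count_roots, roots_prod _ _ hne, Multiset.count_bind, Finset.sum_filter]
  simp [Multiset.count_singleton, eq_comm]

theorem Polynomial.dvd_rootMultiplicity_pow {R : Type*} [CommRing R] [IsDomain R]
    (p : R[X]) (n : ℕ) (a : R) :
    n ∣ rootMultiplicity a (p ^ n) := by
  classical
  rw [← count_roots, roots_pow, Multiset.count_nsmul]
  exact dvd_mul_right n _

theorem stmt_17_general (q : ℕ) [Fact q.Prime] (χ : DirichletCharacter ℂ q)
    (hχ : 1 < orderOf χ) (r : ℕ) (u : ℝ) (hu : u ≤ (q : ℝ))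
    (z : Fin (2 * r) → ℤ) (hz : ∀ j, 0 < z j ∧ (z j : ℝ) ≤ u)
    (hpow : ∃ g : Polynomial (AlgebraicClosure (ZMod q)),
      Polynomial.map (algebraMap (ZMod q) (AlgebraicClosure (ZMod q)))
          (∏ j : Fin (2 * r),
            (Polynomial.X + Polynomial.C ((z j : ZMod q))) ^
              (if Even ((j : ℕ) + 1) then 1 else orderOf χ - 1)) =
        g ^ (orderOf χ)) :
    ∀ j, ∃ ℓ, ℓ ≠ j ∧ z ℓ = z j := by
  classical
  intro j
  by_contra! hj
  obtain ⟨g, hg⟩ := hpow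
  set K := AlgebraicClosure (ZMod q)
  set δ : Fin (2 * r) → ℕ := fun ℓ => if Even ((ℓ : ℕ) + 1) then 1 else orderOf χ - 1
  have hz_mem (ℓ) : z ℓ ∈ Set.Ioc 0 (q : ℤ) := ⟨(hz ℓ).1, by exact_mod_cast (hz ℓ).2.trans hu⟩
  have hroot_unique : ({ℓ | -(z ℓ : K) = -(z j : K)} : Finset (Fin (2 * r))) = {j} := by
    ext ℓ
    simp only [Finset.mem_filter, Finset.mem_univ, true_and, Finset.mem_singleton]
    refine ⟨fun h => ?_, fun h => h ▸ rfl⟩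
    by_contra hne
    exact hj ℓ hne (CharP.intCast_injOn_Ioc K q (hz_mem ℓ) (hz_mem j) (neg_inj.1 h))
  have hmap : (∏ ℓ, (X + C (z ℓ : ZMod q)) ^ δ ℓ).map (algebraMap (ZMod q) K) =
      ∏ ℓ, (X - C (-(z ℓ : K))) ^ δ ℓ := by
    refine (Polynomial.map_prod ..).trans (Finset.prod_congr rfl fun ℓ _ => ?_)
    rw [Polynomial.map_pow, Polynomial.map_add, map_X, map_C, map_intCast, C_neg, sub_neg_eq_add]
  have hmult : rootMultiplicity (-(z j : K)) (g ^ orderOf χ) = δ j := by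
    rw [← hg, hmap, rootMultiplicity_prod_X_sub_C_pow, hroot_unique, Finset.sum_singleton]
  have hdvd : orderOf χ ∣ δ j := hmult ▸ dvd_rootMultiplicity_pow g _ _
  have hδ_pos : 0 < δ j := by simp only [δ]; split <;> omega
  have hδ_lt : δ j < orderOf χ := by simp only [δ]; split <;> omega
  exact (Nat.le_of_dvd hδ_pos hdvd).not_gt hδ_lt

theorem stmt_17 (q : ℕ) [Fact q.Prime] (χ : DirichletCharacter ℂ q)
    (hχ : 1 < orderOf χ) (r : ℕ) (hr : 1 ≤ r) (u : ℝ) (hu : u ≤ (q : ℝ))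
    (z : Fin (2 * r) → ℤ) (hz : ∀ j, 0 < z j ∧ (z j : ℝ) ≤ u)
    (hpow : ∃ g : Polynomial (AlgebraicClosure (ZMod q)),
      Polynomial.map (algebraMap (ZMod q) (AlgebraicClosure (ZMod q)))
          (∏ j : Fin (2 * r),
            (Polynomial.X + Polynomial.C ((z j : ZMod q))) ^
              (if Even ((j : ℕ) + 1) then 1 else orderOf χ - 1)) =
        g ^ (orderOf χ)) :
    ∀ j, ∃ ℓ, ℓ ≠ j ∧ z ℓ = z j :=
  stmt_17_general q χ hχ r u hu z hz hpow
end

section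
/- Fix integers r ≥ 1 and k ≥ 1, a subset S ⊆ {1,…,k}, and a tuple τ = (τ_1,…,τ_k) of positive real numbers. Then the number of elements of B(S;τ) satisfies #B(S;τ) ≤ r^{k(2r+1)} · (∏_{i∈S} τ_i^{r}) · (∏_{i∉S} τ_i^{2r}). -/
open scoped BigOperators

/-- A `2r`-tuple of integers is *bad* if each of its values is attained at least twice. -/
def IsBadTuple {n : ℕ} (z : Fin n → ℤ) : Prop :=
  ∀ j, ∃ ℓ, ℓ ≠ j ∧ z ℓ = z j

/-!
A bad `2r`-tuple takes at most `r` distinct values, so it factors as `v ∘ f` with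
`f : Fin (2r) → Fin r` and `v : Fin r → [1, ⌊τ⌋]`: there are at most `r ^ (2r) ⌊τ⌋ ^ r` of them,
against the trivial count `⌊τ⌋ ^ (2r)` for good tuples. The set `B(S; τ)` lies in the product of
these per-coordinate sets.
-/

open Finset

lemma IsBadTuple.two_mul_card_image_le {n : ℕ} {z : Fin n → ℤ} (hz : IsBadTuple z) :
    2 * #(univ.image z) ≤ n := by
  simpa using mul_card_image_le_card (f := z) univ 2 fun b hb => by
    obtain ⟨j, -, rfl⟩ := mem_image.1 hb
    obtain ⟨ℓ, hℓj, hℓ⟩ := hz j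
    exact one_lt_card.2 ⟨ℓ, by simp [hℓ], j, by simp, hℓj⟩

section Factorization

variable {ι α : Type*} [Fintype ι] [Nonempty ι] [DecidableEq α]

lemma exists_comp_eq_of_card_image_le {s : Finset α} {m : ℕ} {z : ι → α}
    (hs : ∀ j, z j ∈ s) (hm : #(univ.image z) ≤ m) :
    ∃ (f : ι → Fin m) (v : Fin m → s), ∀ j, (v (f j) : α) = z j := by
  set T := univ.image z
  have hTs : ∀ t : T, t.1 ∈ s := fun t => by
    obtain ⟨j, -, hj⟩ := mem_image.1 t.2
    exact hj ▸ hs j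
  let e : T ↪ Fin m := T.equivFin.toEmbedding.trans (Fin.castLEEmb hm)
  obtain ⟨j₀⟩ := ‹Nonempty ι›
  refine ⟨fun j => e ⟨z j, mem_image_of_mem z (mem_univ j)⟩,
    Function.extend e (fun t => ⟨t.1, hTs t⟩) fun _ => ⟨z j₀, hs j₀⟩, fun j => ?_⟩
  rw [e.injective.extend_apply]

lemma card_filter_card_image_le [DecidableEq ι] (s : Finset α) (m : ℕ) :
    #{z ∈ Fintype.piFinset fun _ : ι => s | #(univ.image z) ≤ m} ≤
      m ^ Fintype.card ι * #s ^ m := by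
  calc _ ≤ #(univ.image fun p : (ι → Fin m) × (Fin m → s) => fun j => (p.2 (p.1 j) : α)) := by
        refine card_le_card fun z hz => ?_
        rw [mem_filter, Fintype.mem_piFinset] at hz
        obtain ⟨f, v, hfv⟩ := exists_comp_eq_of_card_image_le hz.1 hz.2
        exact mem_image.2 ⟨(f, v), mem_univ _, funext hfv⟩
    _ ≤ _ := card_image_le
    _ = _ := by simp

end Factorization

section Floor

variable {n : ℕ} {t : ℝ}

lemma mem_piFinset_Icc_one_floor {w : Fin n → ℤ} (hw : ∀ j, 0 < w j ∧ (w j : ℝ) ≤ t) :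
    w ∈ Fintype.piFinset fun _ => Icc 1 ⌊t⌋ :=
  Fintype.mem_piFinset.2 fun j => mem_Icc.2 ⟨(hw j).1, Int.le_floor.2 (hw j).2⟩

lemma IsBadTuple.mem_filter_piFinset_Icc_one_floor {r : ℕ} {w : Fin (2 * r) → ℤ}
    (hbad : IsBadTuple w) (hw : ∀ j, 0 < w j ∧ (w j : ℝ) ≤ t) :
    w ∈ {v ∈ Fintype.piFinset fun _ : Fin (2 * r) => Icc 1 ⌊t⌋ | #(univ.image v) ≤ r} :=
  mem_filter.2 ⟨mem_piFinset_Icc_one_floor hw, by have := hbad.two_mul_card_image_le; omega⟩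

variable (n) (ht : 0 ≤ t)
include ht

lemma card_piFinset_Icc_one_floor_le :
    (#(Fintype.piFinset fun _ : Fin n => Icc (1 : ℤ) ⌊t⌋) : ℝ) ≤ t ^ n := by
  simpa [Int.floor_toNat] using pow_le_pow_left₀ (Nat.cast_nonneg _) (Nat.floor_le ht) n

lemma card_filter_piFinset_Icc_one_floor_le [NeZero n] (m : ℕ) :
    (#{w ∈ Fintype.piFinset fun _ : Fin n => Icc (1 : ℤ) ⌊t⌋ | #(univ.image w) ≤ m} : ℝ) ≤
      m ^ n * t ^ m := by
  have hcount := card_filter_card_image_le (ι := Fin n) (Icc (1 : ℤ) ⌊t⌋) m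
  rw [Fintype.card_fin, Int.card_Icc, add_sub_cancel_right, Int.floor_toNat] at hcount
  calc (#_ : ℝ) ≤ m ^ n * ⌊t⌋₊ ^ m := by exact_mod_cast hcount
    _ ≤ m ^ n * t ^ m := by gcongr; exact Nat.floor_le ht

end Floor

theorem stmt_18_general (r k : ℕ) (hr : 1 ≤ r)
    (S : Finset (Fin k)) (τ : Fin k → ℝ) (hτ : ∀ i, 0 < τ i) :
    (Set.ncard {z : Fin k → Fin (2 * r) → ℤ |
        (∀ i j, 0 < z i j ∧ (z i j : ℝ) ≤ τ i) ∧
        (∀ i ∈ S, IsBadTuple (z i)) ∧ (∀ i ∉ S, ¬ IsBadTuple (z i))} : ℝ) ≤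
      (r : ℝ) ^ (k * (2 * r + 1)) * (∏ i ∈ S, τ i ^ r) * ∏ i ∈ Sᶜ, τ i ^ (2 * r) := by
  have : NeZero (2 * r) := ⟨by omega⟩
  let box : Fin k → Finset (Fin (2 * r) → ℤ) := fun i => Fintype.piFinset fun _ => Icc 1 ⌊τ i⌋
  let A : Fin k → Finset (Fin (2 * r) → ℤ) := fun i =>
    if i ∈ S then {w ∈ box i | #(univ.image w) ≤ r} else box i
  have hA : ∀ i,
      (#(A i) : ℝ) ≤ (r : ℝ) ^ (2 * r + 1) * if i ∈ S then τ i ^ r else τ i ^ (2 * r) := by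
    intro i
    have hr1 : (1 : ℝ) ≤ r := by exact_mod_cast hr
    have hτi := (hτ i).le
    by_cases hi : i ∈ S <;> simp only [A, hi, if_true, if_false]
    · exact (card_filter_piFinset_Icc_one_floor_le _ hτi r).trans <|
        mul_le_mul_of_nonneg_right (pow_le_pow_right₀ hr1 (by omega)) (pow_nonneg hτi r)
    · exact (card_piFinset_Icc_one_floor_le _ hτi).trans <|
        le_mul_of_one_le_left (pow_nonneg hτi _) (one_le_pow₀ hr1)
  calc (Set.ncard _ : ℝ) ≤ #(Fintype.piFinset A) := by
        rw [← Set.ncard_coe_finset]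
        refine Nat.cast_le.2 (Set.ncard_le_ncard (fun z hz => ?_) (finite_toSet _))
        obtain ⟨hbox, hbad, -⟩ := hz
        refine Fintype.mem_piFinset.2 fun i => ?_
        by_cases hi : i ∈ S
        · simpa only [A, hi, if_true] using (hbad i hi).mem_filter_piFinset_Icc_one_floor (hbox i)
        · simpa only [A, hi, if_false] using mem_piFinset_Icc_one_floor (hbox i)
    _ ≤ ∏ i, ((r : ℝ) ^ (2 * r + 1) * if i ∈ S then τ i ^ r else τ i ^ (2 * r)) := by
        rw [Fintype.card_piFinset]; push_cast
        exact prod_le_prod (fun i _ => by positivity) fun i _ => hA i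
    _ = _ := by
        rw [prod_mul_distrib, prod_const, card_univ, Fintype.card_fin, prod_ite, ← pow_mul,
          mul_comm (2 * r + 1) k, mul_assoc]
        congr 3 <;> ext <;> simp

theorem stmt_18 (r k : ℕ) (hr : 1 ≤ r) (hk : 1 ≤ k)
    (S : Finset (Fin k)) (τ : Fin k → ℝ) (hτ : ∀ i, 0 < τ i) :
    (Set.ncard {z : Fin k → Fin (2 * r) → ℤ |
        (∀ i j, 0 < z i j ∧ (z i j : ℝ) ≤ τ i) ∧
        (∀ i ∈ S, IsBadTuple (z i)) ∧ (∀ i ∉ S, ¬ IsBadTuple (z i))} : ℝ) ≤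
      (r : ℝ) ^ (k * (2 * r + 1)) * (∏ i ∈ S, τ i ^ r) * ∏ i ∈ Sᶜ, τ i ^ (2 * r) :=
  stmt_18_general r k hr S τ hτ
end
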